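/- With e_n x^{(β)} = [β_n+1](Σ_{k=1}^{n} θ(ε_k,β)[β_k]) x^{(β+ε_n)} and f_i x^{(β)} = [β_{i+1}+1] x^{(β−ε_i+ε_{i+1})} for 1 ≤ i ≤ n−1, the operators commute: e_n f_i = f_i e_n for all 1 ≤ i ≤ n−1. -/

import Mathlib

/-!
Iterating `[a + b] = q^b [a] + q^{-a} [b]` shows that the coefficient
`Σ_k θ(ε_k, β) [β_k]` of `e_n` is just `[β_1 + ⋯ + β_n]`, so it only depends on `|β|`, which
`f_i` does not change. Both sides of the commutation relation are then the same multiple of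
`x^{(β + ε_n - ε_i + ε_{i+1})}`, or both vanish when `β_i = 0`.
-/

open Finset

/-- The quantum integer `[m] := (q^m - q^{-m})/(q - q^{-1})` for `m : ℤ`. -/
def qint {K : Type*} [Field K] (q : K) (m : ℤ) : K :=
  (q ^ m - q ^ (-m)) / (q - q⁻¹)

/-- `θ(ε_k, β) = q^{Σ_{s>k} β_s - Σ_{s<k} β_s}`. -/
def thq {K : Type*} [Field K] (q : K) (n : ℕ) (β : ℕ → ℤ) (k : ℕ) : K :=
  q ^ ((∑ s ∈ Finset.Icc (k + 1) n, β s) - ∑ s ∈ Finset.Ico 1 k, β s)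

/-- The `i`-th standard basis vector `ε_i`. -/
def eps (i : ℕ) : ℕ → ℤ := fun k => if k = i then 1 else 0

section QuantumInteger

variable {K : Type*} [Field K] {q : K}

lemma qint_add (hq : q ≠ 0) (a b : ℤ) :
    qint q (a + b) = q ^ b * qint q a + q ^ (-a) * qint q b := by
  simp only [qint, mul_div_assoc', ← add_div, mul_sub, ← zpow_add₀ hq]
  ring_nf

lemma thq_succ_of_le (hq : q ≠ 0) (β : ℕ → ℤ) {n k : ℕ} (hk : k ≤ n) :
    thq q (n + 1) β k = q ^ β (n + 1) * thq q n β k := by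
  rw [thq, thq, sum_Icc_succ_top (by omega), ← zpow_add₀ hq]
  ring_nf

lemma thq_succ_self (β : ℕ → ℤ) (n : ℕ) :
    thq q (n + 1) β (n + 1) = q ^ (-∑ s ∈ Icc 1 n, β s) := by
  rw [thq, Icc_eq_empty (by omega), Ico_add_one_right_eq_Icc, sum_empty, zero_sub]

theorem sum_thq_mul_qint (hq : q ≠ 0) (β : ℕ → ℤ) (n : ℕ) :
    ∑ k ∈ Icc 1 n, thq q n β k * qint q (β k) = qint q (∑ k ∈ Icc 1 n, β k) := by
  induction n with
  | zero => simp [qint]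
  | succ n ih =>
    rw [sum_Icc_succ_top (by omega), sum_Icc_succ_top (by omega), qint_add hq, ← ih, mul_sum,
      thq_succ_self]
    congr 1
    refine sum_congr rfl fun k hk => ?_
    rw [thq_succ_of_le hq β (mem_Icc.1 hk).2, mul_assoc]

end QuantumInteger

lemma sum_eps (s : Finset ℕ) (i : ℕ) : ∑ k ∈ s, eps i k = if i ∈ s then 1 else 0 :=
  sum_ite_eq' s i _

lemma sum_sub_eps_add_eps {s : Finset ℕ} {i j : ℕ} (hi : i ∈ s) (hj : j ∈ s) (β : ℕ → ℤ) :
    ∑ k ∈ s, (β - eps i + eps j) k = ∑ k ∈ s, β k := by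
  simp [sum_add_distrib, sum_sub_distrib, sum_eps, hi, hj]

lemma nonneg_add_eps {s : Finset ℕ} {β : ℕ → ℤ} (hβ : ∀ k ∈ s, 0 ≤ β k) (j : ℕ) :
    ∀ k ∈ s, 0 ≤ (β + eps j) k := fun k hk => by
  have := hβ k hk
  simp only [Pi.add_apply, eps]
  split_ifs <;> omega

lemma nonneg_sub_eps_add_eps {s : Finset ℕ} {β : ℕ → ℤ} (hβ : ∀ k ∈ s, 0 ≤ β k) {i : ℕ}
    (hi : 0 < β i) (j : ℕ) : ∀ k ∈ s, 0 ≤ (β - eps i + eps j) k := fun k hk => by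
  have := hβ k hk
  simp only [Pi.add_apply, Pi.sub_apply, eps]
  split_ifs <;> subst_vars <;> omega

theorem en_fi_commute_general {K V : Type*} [Field K] [AddCommGroup V] [Module K V]
    (q : K) (hq0 : q ≠ 0) (n : ℕ)
    (X : (ℕ → ℤ) → V)
    (hX0 : ∀ β : ℕ → ℤ, (∃ k ∈ Finset.Icc 1 n, β k < 0) → X β = 0)
    (en : Module.End K V) (f : ℕ → Module.End K V)
    (hen : ∀ β : ℕ → ℤ, (∀ k ∈ Finset.Icc 1 n, 0 ≤ β k) →
      en (X β) = (qint q (β n + 1) * ∑ k ∈ Finset.Icc 1 n, thq q n β k * qint q (β k)) •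
        X (β + eps n))
    (hf : ∀ i, 1 ≤ i → i + 1 ≤ n → ∀ β : ℕ → ℤ, (∀ k ∈ Finset.Icc 1 n, 0 ≤ β k) →
      f i (X β) = qint q (β (i + 1) + 1) • X (β - eps i + eps (i + 1))) :
    ∀ i, 1 ≤ i → i + 1 ≤ n → ∀ β : ℕ → ℤ, (∀ k ∈ Finset.Icc 1 n, 0 ≤ β k) →
      (en * f i) (X β) = (f i * en) (X β) := by
  intro i hi hin β hβ
  have hiI : i ∈ Icc 1 n := mem_Icc.2 ⟨hi, by omega⟩
  have hi1I : i + 1 ∈ Icc 1 n := mem_Icc.2 ⟨by omega, hin⟩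
  rw [Module.End.mul_apply, Module.End.mul_apply, hf i hi hin β hβ, hen β hβ, map_smul, map_smul,
    hf i hi hin _ (nonneg_add_eps hβ n)]
  rcases (hβ i hiI).eq_or_lt with hβi | hβi
  · have hvanish : ∀ γ : ℕ → ℤ, γ i = 0 → X (γ - eps i + eps (i + 1)) = 0 := fun γ hγ =>
      hX0 _ ⟨i, hiI, by simp [eps, hγ]⟩
    rw [hvanish β hβi.symm, hvanish (β + eps n) (by simp [eps, ← hβi, show i ≠ n by omega])]
    simp only [map_zero, smul_zero]
  rw [hen _ (nonneg_sub_eps_add_eps hβ hβi (i + 1)), sum_thq_mul_qint hq0, sum_thq_mul_qint hq0, sum_sub_eps_add_eps hiI hi1I,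
    smul_smul, smul_smul, show β - eps i + eps (i + 1) + eps n = β + eps n - eps i + eps (i + 1) by
      abel]
  congr 1
  rcases eq_or_ne (i + 1) n with rfl | hn
  · simp only [Pi.add_apply, Pi.sub_apply, eps, Nat.add_eq_left, one_ne_zero, ↓reduceIte,
      sub_zero]
    ring
  · simp only [Pi.add_apply, Pi.sub_apply, eps, show n ≠ i by omega, ↓reduceIte, sub_zero,
      hn.symm, add_zero, hn]
    ring

theorem en_fi_commute {K V : Type*} [Field K] [AddCommGroup V] [Module K V]
    (q : K) (hq0 : q ≠ 0) (hq1 : q ≠ 1) (hqm : q ≠ -1) (n : ℕ)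
    (X : (ℕ → ℤ) → V)
    (hX0 : ∀ β : ℕ → ℤ, (∃ k ∈ Finset.Icc 1 n, β k < 0) → X β = 0)
    (en : Module.End K V) (f : ℕ → Module.End K V)
    (hen : ∀ β : ℕ → ℤ, (∀ k ∈ Finset.Icc 1 n, 0 ≤ β k) →
      en (X β) = (qint q (β n + 1) * ∑ k ∈ Finset.Icc 1 n, thq q n β k * qint q (β k)) •
        X (β + eps n))
    (hf : ∀ i, 1 ≤ i → i + 1 ≤ n → ∀ β : ℕ → ℤ, (∀ k ∈ Finset.Icc 1 n, 0 ≤ β k) →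
      f i (X β) = qint q (β (i + 1) + 1) • X (β - eps i + eps (i + 1))) :
    ∀ i, 1 ≤ i → i + 1 ≤ n → ∀ β : ℕ → ℤ, (∀ k ∈ Finset.Icc 1 n, 0 ≤ β k) →
      (en * f i) (X β) = (f i * en) (X β) :=
  en_fi_commute_general q hq0 n X hX0 en f hen hf
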